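/- arXiv:2212.05739 — 3 statements merged into one kernel-verified Lean document; each statement's English description precedes it below -/
import Mathlib

section
/- If n ≥ 4 is an even integer, then λ(K⁺_{n/2,n/2}) > n/2 + 2/n; if n ≥ 5 is an odd integer, then λ(K⁺_{(n−1)/2,(n+1)/2}) > n/2 + 3/(2n). -/
open SimpleGraph

/-- The spectral radius (largest adjacency eigenvalue) of a finite simple graph. -/
noncomputable def specRad {V : Type*} [Fintype V] (G : SimpleGraph V) : ℝ :=
  letI : DecidableEq V := Classical.decEq V
  letI : DecidableRel G.Adj := Classical.decRel _
  sSup (spectrum ℝ (G.adjMatrix ℝ))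

/-- `KplusAB a b` : the complete bipartite graph `K_{a,b}` with one extra edge
(between vertices `0` and `1`) inside the part of size `a`. -/
def KplusAB (a b : ℕ) : SimpleGraph (Fin a ⊕ Fin b) where
  Adj x y :=
    match x, y with
    | .inl i, .inl j => (i.val = 0 ∧ j.val = 1) ∨ (i.val = 1 ∧ j.val = 0)
    | .inl _, .inr _ => True
    | .inr _, .inl _ => True
    | .inr _, .inr _ => False
  symm := by constructor; rintro (i | i) (j | j) h <;> simp_all <;> tauto
  loopless := by constructor; rintro (i | i) h <;> simp_all <;> omega

/-!
For symmetric real `A`, `xᵀ A x ≤ λ_max · xᵀ x`, since `λ_max • 1 - A` has spectrum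
`λ_max - spec A ⊆ [0, ∞)` and is therefore positive semidefinite. Test `K⁺_{a,b}` with the vector
that is `p` on the two endpoints of the added edge and `q` elsewhere. For the target bound `t`, the
ratio `p / q = b / (t - 1)` maximises `xᵀ A x - t · xᵀ x`, and the maximum is positive: with `p, q`
scaled to polynomials in `m` it is `2(m-1)²(m²-m+1)/m` for `a = b = m` and `18m²(2m²+1)/(2m+1)`
for `a = m`, `b = m + 1`.
-/

open Matrix

theorem Matrix.IsHermitian.dotProduct_mulVec_le_sSup_spectrum_mul {n : Type*} [Fintype n]
    [DecidableEq n] {A : Matrix n n ℝ} (hA : A.IsHermitian) (x : n → ℝ) :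
    x ⬝ᵥ (A *ᵥ x) ≤ sSup (spectrum ℝ A) * (x ⬝ᵥ x) := by
  set M := sSup (spectrum ℝ A)
  have hpsd : (algebraMap ℝ _ M - A).PosSemidef := by
    refine posSemidef_iff_isHermitian_and_spectrum_nonneg.mpr ⟨(isHermitian_diagonal _).sub hA, ?_⟩
    rw [← spectrum.singleton_sub_eq]
    rintro _ ⟨_, rfl, μ, hμ, rfl⟩
    exact sub_nonneg.mpr (le_csSup finite_real_spectrum.bddAbove hμ)
  simpa [sub_mulVec, Algebra.algebraMap_eq_smul_one, smul_mulVec, dotProduct_smul] using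
    hpsd.dotProduct_mulVec_nonneg x

section SpectralRadius

variable {V : Type*} [Fintype V] [DecidableEq V] (G : SimpleGraph V) [DecidableRel G.Adj]

theorem specRad_eq_sSup_spectrum : specRad G = sSup (spectrum ℝ (G.adjMatrix ℝ)) := by
  unfold specRad
  congr!

theorem dotProduct_adjMatrix_mulVec_le_specRad_mul (x : V → ℝ) :
    x ⬝ᵥ (G.adjMatrix ℝ *ᵥ x) ≤ specRad G * (x ⬝ᵥ x) :=
  specRad_eq_sSup_spectrum G ▸
    (isHermitian_iff_isSymm.mpr G.isSymm_adjMatrix).dotProduct_mulVec_le_sSup_spectrum_mul x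

theorem lt_specRad_of_mul_dotProduct_lt {t : ℝ} (x : V → ℝ)
    (h : t * (x ⬝ᵥ x) < x ⬝ᵥ (G.adjMatrix ℝ *ᵥ x)) : t < specRad G :=
  lt_of_mul_lt_mul_right (h.trans_le (dotProduct_adjMatrix_mulVec_le_specRad_mul G x))
    (dotProduct_self_star_nonneg x)

end SpectralRadius

theorem Fin.sum_ite_val_le_one {R : Type*} [CommRing R] {a : ℕ} (ha : 2 ≤ a) (p q : R) :
    ∑ i : Fin a, (if (i : ℕ) ≤ 1 then p else q) = 2 * p + (a - 2) * q := by
  obtain ⟨c, rfl⟩ := Nat.exists_eq_add_of_le' ha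
  simp [Fin.sum_univ_succ]
  ring

namespace KplusAB

variable {a b : ℕ}

@[simp]
theorem adj_inl_inl (i j : Fin a) : (KplusAB a b).Adj (.inl i) (.inl j) ↔
    (i : ℕ) = 0 ∧ (j : ℕ) = 1 ∨ (i : ℕ) = 1 ∧ (j : ℕ) = 0 :=
  Iff.rfl

@[simp]
theorem adj_inl_inr (i : Fin a) (j : Fin b) : (KplusAB a b).Adj (.inl i) (.inr j) :=
  trivial

@[simp]
theorem adj_inr_inl (i : Fin a) (j : Fin b) : (KplusAB a b).Adj (.inr j) (.inl i) :=
  trivial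

@[simp]
theorem not_adj_inr_inr (i j : Fin b) : ¬(KplusAB a b).Adj (.inr i) (.inr j) :=
  id

def testVec (a b : ℕ) (p q : ℝ) : Fin a ⊕ Fin b → ℝ :=
  Sum.elim (fun i => if (i : ℕ) ≤ 1 then p else q) fun _ => q

variable (p q : ℝ)

theorem testVec_dotProduct_self (ha : 2 ≤ a) :
    testVec a b p q ⬝ᵥ testVec a b p q = 2 * p ^ 2 + (a - 2 + b) * q ^ 2 := by
  simp only [dotProduct, Fintype.sum_sum_type, testVec, Sum.elim_inl, Sum.elim_inr,
    apply_ite (fun x => x * x), Fin.sum_ite_val_le_one ha, Finset.sum_const, Finset.card_univ,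
    Fintype.card_fin, nsmul_eq_mul]
  ring

section Adjacency

variable [DecidableRel (KplusAB a b).Adj]

theorem adjMatrix_mulVec_testVec_inl (ha : 2 ≤ a) (i : Fin a) :
    ((KplusAB a b).adjMatrix ℝ *ᵥ testVec a b p q) (.inl i) =
      (if (i : ℕ) ≤ 1 then p else 0) + b * q := by
  obtain ⟨c, rfl⟩ := Nat.exists_eq_add_of_le' ha
  obtain ⟨_ | _ | k, hk⟩ := i <;>
    simp [mulVec, dotProduct, testVec, Fin.sum_univ_succ, adjMatrix_apply]

theorem adjMatrix_mulVec_testVec_inr (ha : 2 ≤ a) (j : Fin b) :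
    ((KplusAB a b).adjMatrix ℝ *ᵥ testVec a b p q) (.inr j) = 2 * p + (a - 2) * q := by
  simp [mulVec, dotProduct, testVec, adjMatrix_apply, Fin.sum_ite_val_le_one ha]

theorem testVec_dotProduct_adjMatrix_mulVec (ha : 2 ≤ a) :
    testVec a b p q ⬝ᵥ ((KplusAB a b).adjMatrix ℝ *ᵥ testVec a b p q) =
      2 * p ^ 2 + 4 * b * p * q + 2 * b * (a - 2) * q ^ 2 := by
  have hinl (i : Fin a) : testVec a b p q (.inl i) *
      ((KplusAB a b).adjMatrix ℝ *ᵥ testVec a b p q) (.inl i) =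
        if (i : ℕ) ≤ 1 then p * (p + b * q) else q * (b * q) := by
    rw [adjMatrix_mulVec_testVec_inl _ _ ha]
    simp only [testVec, Sum.elim_inl]
    split_ifs <;> ring
  simp only [dotProduct, Fintype.sum_sum_type, hinl, Fin.sum_ite_val_le_one ha,
    adjMatrix_mulVec_testVec_inr _ _ ha]
  simp only [testVec, Sum.elim_inr, Finset.sum_const, Finset.card_univ, Fintype.card_fin,
    nsmul_eq_mul]
  ring

end Adjacency

theorem lt_specRad_of_lt (ha : 2 ≤ a) {p q t : ℝ}
    (h : t * (2 * p ^ 2 + (a - 2 + b) * q ^ 2) <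
      2 * p ^ 2 + 4 * b * p * q + 2 * b * (a - 2) * q ^ 2) :
    t < specRad (KplusAB a b) := by
  classical
  refine lt_specRad_of_mul_dotProduct_lt _ (testVec a b p q) ?_
  rwa [testVec_dotProduct_self _ _ ha, testVec_dotProduct_adjMatrix_mulVec _ _ ha]

theorem lt_specRad_even {n : ℕ} (hn : 4 ≤ n) (hn2 : Even n) :
    (n : ℝ) / 2 + 2 / n < specRad (KplusAB (n / 2) (n / 2)) := by
  obtain ⟨m, rfl⟩ := hn2
  rw [show (m + m) / 2 = m by omega]
  refine lt_specRad_of_lt (p := m ^ 2) (q := m ^ 2 - m + 1) (by omega) ?_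
  have hm : (2 : ℝ) ≤ m := by exact_mod_cast (by omega : 2 ≤ m)
  have hm1 : (0 : ℝ) < m - 1 := by linarith
  have hD : (0 : ℝ) < m ^ 2 - m + 1 := by nlinarith
  push_cast
  rw [← sub_pos]
  convert (show (0 : ℝ) < 2 * (m - 1) ^ 2 * (m ^ 2 - m + 1) / m by positivity) using 1
  field_simp
  ring

theorem lt_specRad_odd {n : ℕ} (hn : 5 ≤ n) (hn2 : Odd n) :
    (n : ℝ) / 2 + 3 / (2 * n) < specRad (KplusAB ((n - 1) / 2) ((n + 1) / 2)) := by
  obtain ⟨m, rfl⟩ := hn2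
  rw [show (2 * m + 1 - 1) / 2 = m by omega, show (2 * m + 1 + 1) / 2 = m + 1 by omega]
  refine lt_specRad_of_lt (p := 2 * m ^ 2 + 3 * m + 1) (q := 2 * m ^ 2 + 1) (by omega) ?_
  have hm : (0 : ℝ) < m := by exact_mod_cast (by omega : 0 < m)
  push_cast
  rw [← sub_pos]
  convert (show (0 : ℝ) < 18 * m ^ 2 * (2 * m ^ 2 + 1) / (2 * m + 1) by positivity) using 1
  field_simp
  ring

end KplusAB

theorem Kplus_lower_bounds (n : ℕ) :
    (4 ≤ n → Even n → specRad (KplusAB (n / 2) (n / 2)) > (n : ℝ) / 2 + 2 / n) ∧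
      (5 ≤ n → Odd n →
        specRad (KplusAB ((n - 1) / 2) ((n + 1) / 2)) > (n : ℝ) / 2 + 3 / (2 * n)) :=
  ⟨KplusAB.lt_specRad_even, KplusAB.lt_specRad_odd⟩
end

section
/- Let n ≥ 4 be an integer. Then λ(K₁ ∨ (K₃ ∪ I_{n−4})) is the largest real root of the polynomial p(x) = x³ − 2x² + (1 − n)x + 2n − 8; moreover, if n ≥ 7, then λ(K₁ ∨ (K₃ ∪ I_{n−4})) < n/2. -/
open SimpleGraph

/-- `K₁ ∨ (K₃ ∪ I_s)` : apex vertex `0` joined to all others, vertices `1,2,3`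
forming a triangle, and `s` further vertices with no other edges. -/
def coneTriangle (s : ℕ) : SimpleGraph (Fin (s + 4)) where
  Adj x y := x ≠ y ∧ (x.val = 0 ∨ y.val = 0 ∨ (x.val ≤ 3 ∧ y.val ≤ 3))
  symm := ⟨by rintro x y ⟨h1, h2⟩; exact ⟨h1.symm, by tauto⟩⟩
  loopless := ⟨by rintro x ⟨h1, _⟩; exact h1 rfl⟩

/-!
The vectors that are constant on the cells {apex}, triangle, rest of `K₁ ∨ (K₃ ∪ I_s)` form an
invariant subspace of the adjacency matrix, on which it acts by the quotient matrix
`[[0, 3, s], [1, 2, 0], [1, 0, 0]]` with characteristic polynomial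
`x³ - 2x² - (s + 3)x + 2s`. A root `r > 2` (which exists since the polynomial is `-6` at `2`)
gives a positive eigenvector `(r, r / (r - 2), 1)`, and for a nonnegative symmetric matrix an
eigenvalue with a positive eigenvector dominates every eigenvalue in absolute value. Hence `r` is
the spectral radius and the only root above `2`. The bound `r < n / 2` is a sign check of the
polynomial.
-/

open Matrix

theorem Matrix.mem_spectrum_iff_exists_mulVec_eq_smul {K n : Type*} [Field K] [Fintype n]
    [DecidableEq n] (A : Matrix n n K) (μ : K) :
    μ ∈ spectrum K A ↔ ∃ v ≠ 0, A *ᵥ v = μ • v := by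
  rw [← Matrix.spectrum_toLin', ← Module.End.hasEigenvalue_iff_mem_spectrum]
  constructor
  · intro h
    obtain ⟨v, hv⟩ := h.exists_hasEigenvector
    exact ⟨v, hv.2, by simpa using hv.apply_eq_smul⟩
  · rintro ⟨v, hv, h⟩
    exact Module.End.hasEigenvalue_of_hasEigenvector
      ⟨Module.End.mem_eigenspace_iff.2 (by simpa using h), hv⟩

theorem Matrix.abs_le_of_mulVec_eq_smul {n : Type*} [Fintype n] {M : Matrix n n ℝ}
    (hM : ∀ i j, 0 ≤ M i j) {w : n → ℝ} (hw : ∀ i, 0 < w i) {r : ℝ} (hwM : w ᵥ* M = r • w)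
    {v : n → ℝ} (hv : v ≠ 0) {x : ℝ} (hMv : M *ᵥ v = x • v) : |x| ≤ r := by
  have hle : |x| • |v| ≤ M *ᵥ |v| := fun i =>
    calc |x| * |v i| = |∑ j, M i j * v j| := by
          rw [← abs_mul, ← smul_eq_mul, ← Pi.smul_apply, ← hMv]; rfl
      _ ≤ ∑ j, |M i j * v j| := Finset.abs_sum_le_sum_abs _ _
      _ = (M *ᵥ |v|) i := by simp [mulVec, dotProduct, abs_mul, abs_of_nonneg (hM i _)]
  have hpos : 0 < w ⬝ᵥ |v| := by
    obtain ⟨i, hi⟩ := Function.ne_iff.1 hv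
    exact Finset.sum_pos' (fun j _ => mul_nonneg (hw j).le (abs_nonneg _))
      ⟨i, Finset.mem_univ _, mul_pos (hw i) (abs_pos.2 hi)⟩
  refine le_of_mul_le_mul_right ?_ hpos
  calc |x| * (w ⬝ᵥ |v|) = w ⬝ᵥ (|x| • |v|) := by rw [dotProduct_smul, smul_eq_mul]
    _ ≤ w ⬝ᵥ (M *ᵥ |v|) := dotProduct_le_dotProduct_of_nonneg_left hle fun i => (hw i).le
    _ = r * (w ⬝ᵥ |v|) := by rw [dotProduct_mulVec, hwM, smul_dotProduct, smul_eq_mul]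

theorem SimpleGraph.specRad_eq_of_mulVec_eq_smul {V : Type*} [Fintype V] [DecidableEq V]
    [Nonempty V] (G : SimpleGraph V) [DecidableRel G.Adj] {w : V → ℝ} (hw : ∀ i, 0 < w i)
    {r : ℝ} (hGw : G.adjMatrix ℝ *ᵥ w = r • w) : specRad G = r := by
  have hmem : r ∈ spectrum ℝ (G.adjMatrix ℝ) :=
    (mem_spectrum_iff_exists_mulVec_eq_smul _ _).2
      ⟨w, fun h => (hw (Classical.arbitrary V)).ne' (congrFun h _), hGw⟩
  have hub : ∀ x ∈ spectrum ℝ (G.adjMatrix ℝ), x ≤ r := by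
    intro x hx
    obtain ⟨v, hv, hGv⟩ := (mem_spectrum_iff_exists_mulVec_eq_smul _ _).1 hx
    have hwG : w ᵥ* G.adjMatrix ℝ = r • w := by
      rw [← transpose_adjMatrix, vecMul_transpose, hGw]
    exact (le_abs_self x).trans <| abs_le_of_mulVec_eq_smul
      (fun i j => by rw [adjMatrix_apply]; split_ifs <;> norm_num) hw hwG hv hGv
  have hsup : sSup (spectrum ℝ (G.adjMatrix ℝ)) = r := IsGreatest.csSup_eq ⟨hmem, hub⟩
  unfold specRad
  convert hsup

theorem coneTriangle_adj {s : ℕ} {x y : Fin (s + 4)} :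
    (coneTriangle s).Adj x y ↔ x ≠ y ∧ (x.val = 0 ∨ y.val = 0 ∨ (x.val ≤ 3 ∧ y.val ≤ 3)) :=
  Iff.rfl

def coneTriangleVec (s : ℕ) (a b c : ℝ) : Fin (s + 4) → ℝ :=
  fun j => if j.val = 0 then a else if j.val ≤ 3 then b else c

theorem smul_coneTriangleVec (s : ℕ) (t a b c : ℝ) :
    t • coneTriangleVec s a b c = coneTriangleVec s (t * a) (t * b) (t * c) := by
  ext j
  simp only [coneTriangleVec, Pi.smul_apply, smul_eq_mul]
  split_ifs <;> rfl

theorem coneTriangleVec_pos {s : ℕ} {a b c : ℝ} (ha : 0 < a) (hb : 0 < b) (hc : 0 < c)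
    (j : Fin (s + 4)) : 0 < coneTriangleVec s a b c j := by
  unfold coneTriangleVec
  split_ifs <;> assumption

theorem adjMatrix_coneTriangle_mulVec (s : ℕ) [DecidableRel (coneTriangle s).Adj] (a b c : ℝ) :
    (coneTriangle s).adjMatrix ℝ *ᵥ coneTriangleVec s a b c =
      coneTriangleVec s (3 * b + s * c) (a + 2 * b) a := by
  ext ⟨k, hk⟩
  simp only [mulVec, dotProduct, adjMatrix_apply, Fin.sum_univ_succ, coneTriangleVec,
    coneTriangle_adj, ne_eq, Fin.ext_iff, Fin.val_succ, Fin.val_zero]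
  rcases k with _ | _ | _ | _ | k <;> simp [add_assoc] <;> ring

def coneTrianglePoly (s : ℕ) (x : ℝ) : ℝ :=
  x ^ 3 - 2 * x ^ 2 - (s + 3) * x + 2 * s

theorem adjMatrix_coneTriangle_mulVec_eq_smul {s : ℕ} [DecidableRel (coneTriangle s).Adj]
    {r : ℝ} (hr : 2 < r) (hroot : coneTrianglePoly s r = 0) :
    (coneTriangle s).adjMatrix ℝ *ᵥ coneTriangleVec s r (r / (r - 2)) 1 =
      r • coneTriangleVec s r (r / (r - 2)) 1 := by
  have hr2 : r - 2 ≠ 0 := by linarith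
  rw [adjMatrix_coneTriangle_mulVec, smul_coneTriangleVec]
  congr 1
  · unfold coneTrianglePoly at hroot
    field_simp
    linear_combination -hroot
  · field_simp
    ring
  · ring

theorem specRad_coneTriangle_eq {s : ℕ} {r : ℝ} (hr : 2 < r) (hroot : coneTrianglePoly s r = 0) :
    specRad (coneTriangle s) = r := by
  classical
  exact specRad_eq_of_mulVec_eq_smul _
    (coneTriangleVec_pos (by linarith) (div_pos (by linarith) (by linarith)) one_pos)
    (adjMatrix_coneTriangle_mulVec_eq_smul hr hroot)

theorem exists_coneTrianglePoly_eq_zero (s : ℕ) : ∃ r, 2 < r ∧ coneTrianglePoly s r = 0 := by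
  have hcont : ContinuousOn (coneTrianglePoly s) (Set.Icc 2 (s + 4)) := by
    unfold coneTrianglePoly
    fun_prop
  have hs : (0 : ℝ) ≤ s := s.cast_nonneg
  have hsign : (0 : ℝ) ∈ Set.Ioo (coneTrianglePoly s 2) (coneTrianglePoly s (s + 4)) := by
    unfold coneTrianglePoly
    constructor <;> nlinarith [pow_pos (by linarith : (0 : ℝ) < s + 3) 2]
  obtain ⟨r, hr, hroot⟩ := intermediate_value_Ioo (by linarith) hcont hsign
  exact ⟨r, hr.1, hroot⟩

theorem coneTrianglePoly_pos {s : ℕ} (hs : 3 ≤ s) {x : ℝ} (hx : (s + 4) / 2 ≤ x) :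
    0 < coneTrianglePoly s x := by
  have hs' : (3 : ℝ) ≤ s := by exact_mod_cast hs
  have hx' : 7 / 2 ≤ x := by linarith
  calc 0 < x ^ 3 - 4 * x ^ 2 + 5 * x - 8 := by
        nlinarith [mul_nonneg (sub_nonneg.2 hx') (sq_nonneg (x - 1 / 4))]
    _ ≤ x ^ 3 - 4 * x ^ 2 + 5 * x - 8 + (2 * x - (s + 4)) * (x - 2) :=
        le_add_of_nonneg_right (mul_nonneg (by linarith) (by linarith))
    _ = coneTrianglePoly s x := by
        unfold coneTrianglePoly
        ring

theorem coneTriangle_char_poly (n : ℕ) (hn : 4 ≤ n) :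
    ((specRad (coneTriangle (n - 4))) ^ 3 - 2 * (specRad (coneTriangle (n - 4))) ^ 2
          + (1 - (n : ℝ)) * specRad (coneTriangle (n - 4)) + 2 * n - 8 = 0 ∧
        ∀ x : ℝ, x ^ 3 - 2 * x ^ 2 + (1 - (n : ℝ)) * x + 2 * n - 8 = 0 →
          x ≤ specRad (coneTriangle (n - 4))) ∧
      (7 ≤ n → specRad (coneTriangle (n - 4)) < (n : ℝ) / 2) := by
  set s := n - 4 with hs
  have hns : (n : ℝ) = s + 4 := by
    rw [hs, Nat.cast_sub hn]
    push_cast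
    ring
  have hpoly (x : ℝ) : x ^ 3 - 2 * x ^ 2 + (1 - (n : ℝ)) * x + 2 * n - 8 = coneTrianglePoly s x := by
    rw [hns, coneTrianglePoly]
    ring
  simp only [hpoly]
  obtain ⟨r, hr2, hroot⟩ := exists_coneTrianglePoly_eq_zero s
  have hspec : specRad (coneTriangle s) = r := specRad_coneTriangle_eq hr2 hroot
  refine ⟨⟨hspec ▸ hroot, fun x hx => ?_⟩, fun h7 => ?_⟩
  · rcases le_or_gt x 2 with hx2 | hx2
    · linarith
    · rw [specRad_coneTriangle_eq hx2 hx]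
  · rw [hspec, hns]
    by_contra! hge
    exact (coneTrianglePoly_pos (by omega) hge).ne' hroot
end

section
/- For every odd integer n ≥ 5, λ(K⁺_{(n−1)/2,(n+1)/2}) ≥ √(n² − 1)/2 + 2/(n − 1). -/
open SimpleGraph

/-!
A Hermitian matrix lies below `λ_max • 1` in the Loewner order, so every Rayleigh quotient is a
lower bound for the spectral radius. On `K_{a,b}` the test vector equal to `√b` on the part of
size `a` and to `√a` on the part of size `b` is a Perron vector with Rayleigh quotient `√(ab)`;
the extra edge raises the quadratic form by `2b` while the squared norm is `2ab`, so the
Rayleigh quotient for `K⁺_{a,b}` is `√(ab) + 1/a`.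
-/

open Matrix

open scoped MatrixOrder in
theorem Matrix.IsHermitian.dotProduct_mulVec_le_sSup_spectrum {m : Type*} [Fintype m]
    [DecidableEq m] {A : Matrix m m ℝ} (hA : A.IsHermitian) (v : m → ℝ) :
    v ⬝ᵥ (A *ᵥ v) ≤ sSup (spectrum ℝ A) * (v ⬝ᵥ v) := by
  have hle : A ≤ algebraMap ℝ _ (sSup (spectrum ℝ A)) :=
    le_algebraMap_of_spectrum_le fun x hx => le_csSup A.finite_real_spectrum.bddAbove hx
  simpa [Algebra.algebraMap_eq_smul_one, sub_mulVec, smul_mulVec, dotProduct_smul] using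
    (Matrix.le_iff.mp hle).dotProduct_mulVec_nonneg v

theorem SimpleGraph.dotProduct_adjMatrix_mulVec_le_specRad {V : Type*} [Fintype V]
    (G : SimpleGraph V) [DecidableRel G.Adj] (v : V → ℝ) :
    v ⬝ᵥ (G.adjMatrix ℝ *ᵥ v) ≤ specRad G * (v ⬝ᵥ v) := by
  classical
  rw [specRad]
  convert (G.isHermitian_adjMatrix ℝ).dotProduct_mulVec_le_sSup_spectrum v using 4
  congr!

theorem SimpleGraph.dotProduct_adjMatrix_mulVec {V α : Type*} [Fintype V]
    (G : SimpleGraph V) [DecidableRel G.Adj] [CommSemiring α] (v : V → α) :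
    v ⬝ᵥ (G.adjMatrix α *ᵥ v) = ∑ x, ∑ y, if G.Adj x y then v x * v y else 0 := by
  simp [dotProduct, mulVec, adjMatrix_apply, Finset.mul_sum]

theorem dotProduct_adjMatrix_mulVec_KplusAB_sumElim {a : ℕ} (b : ℕ) (ha : 2 ≤ a)
    [DecidableRel (KplusAB a b).Adj] (s t : ℝ) :
    Sum.elim (fun _ => s) (fun _ => t) ⬝ᵥ
        ((KplusAB a b).adjMatrix ℝ *ᵥ Sum.elim (fun _ => s) (fun _ => t)) =
      2 * s ^ 2 + 2 * a * b * s * t := by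
  obtain ⟨c, rfl⟩ := Nat.exists_eq_add_of_le' ha
  rw [dotProduct_adjMatrix_mulVec]
  simp [Fintype.sum_sum_type, Fin.sum_univ_succ, KplusAB]
  ring

theorem sqrt_mul_add_inv_le_specRad_KplusAB {a b : ℕ} (ha : 2 ≤ a) (hb : 0 < b) :
    √(a * b : ℝ) + 1 / a ≤ specRad (KplusAB a b) := by
  classical
  have hquad := (KplusAB a b).dotProduct_adjMatrix_mulVec_le_specRad
    (Sum.elim (fun _ => √(b : ℝ)) (fun _ => √(a : ℝ)))
  have hnorm : Sum.elim (fun _ => √(b : ℝ)) (fun _ => √(a : ℝ)) ⬝ᵥ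
      Sum.elim (fun (_ : Fin a) => √(b : ℝ)) (fun (_ : Fin b) => √(a : ℝ)) = 2 * a * b := by
    simp [dotProduct, Fintype.sum_sum_type]
    ring
  rw [dotProduct_adjMatrix_mulVec_KplusAB_sumElim b ha, hnorm] at hquad
  have hpos : (0 : ℝ) < 2 * a * b := by positivity
  rw [← mul_le_mul_iff_of_pos_right hpos]
  calc (√(a * b : ℝ) + 1 / a) * (2 * a * b) = 2 * b + 2 * a * b * √(a * b : ℝ) := by
        field_simp
        ring
    _ = 2 * √(b : ℝ) ^ 2 + 2 * a * b * √(b : ℝ) * √(a : ℝ) := by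
        rw [Real.sq_sqrt b.cast_nonneg, Real.sqrt_mul a.cast_nonneg]
        ring
    _ ≤ _ := hquad

theorem Kplus_odd_lower_bound (n : ℕ) (hn : 5 ≤ n) (hodd : Odd n) :
    Real.sqrt ((n : ℝ) ^ 2 - 1) / 2 + 2 / ((n : ℝ) - 1) ≤
      specRad (KplusAB ((n - 1) / 2) ((n + 1) / 2)) := by
  obtain ⟨m, rfl⟩ := hodd
  rw [show (2 * m + 1 - 1) / 2 = m by omega, show (2 * m + 1 + 1) / 2 = m + 1 by omega]
  have hm : (m : ℝ) ≠ 0 := by norm_cast; omega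
  calc √(((2 * m + 1 : ℕ) : ℝ) ^ 2 - 1) / 2 + 2 / (((2 * m + 1 : ℕ) : ℝ) - 1)
      = √((m : ℕ) * ((m + 1 : ℕ) : ℝ)) + 1 / (m : ℕ) := by
        push_cast
        rw [show (2 * m + 1 : ℝ) ^ 2 - 1 = 2 ^ 2 * (m * (m + 1)) by ring,
          Real.sqrt_mul' _ (by positivity), Real.sqrt_sq zero_le_two]
        field_simp
        ring
    _ ≤ specRad (KplusAB m (m + 1)) := sqrt_mul_add_inv_le_specRad_KplusAB (by omega) m.succ_pos
end
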